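/- Let J ⊂ ℝ be a bounded interval and let μ be a finite Borel measure on J satisfying the doubling condition μ((x−2r,x+2r) ∩ J) ≤ b μ((x−r,x+r) ∩ J) for all x ∈ J and 0 < r < |J|, with μ(I) > 0 for every nondegenerate subinterval I. If r : J → ℝ satisfies 1 ≤ r_-(J) ≤ r_+(J) < ∞ and r ∈ LH(J), then there exists a constant C > 0 such that μ(I)^{r_-(I) − r_+(I)} ≤ C for all subintervals I of J. -/

import Mathlib

/-!
Iterating the doubling condition about `log₂ (|J| / |I|)` times from `I` to a fixed subinterval
of positive measure gives the polynomial lower bound `μ(I) ≥ m |I|^K`. Log-Hölder continuity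
bounds the oscillation `δ = r_+(I) - r_-(I)` by `c / (-log |I|)`. Hence
`μ(I)^(-δ) = exp (δ · (-log μ(I))) ≤ exp (δ · (-log m) + K · δ · (-log |I|))`
stays bounded.
-/

open MeasureTheory Set Filter
open scoped ENNReal NNReal

/-- Variable exponent Lebesgue norm of `f` on `E` w.r.t. measure `μ`. -/
noncomputable def vLpNorm (μ : Measure ℝ) (p : ℝ → ℝ) (E : Set ℝ) (f : ℝ → ℝ) : ℝ :=
  sInf {lam : ℝ | 0 < lam ∧ (∫ x in E, |f x / lam| ^ p x ∂μ) ≤ 1}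

/-- The variable exponent norm of `f` on `E` is finite. -/
def vLpFinite (μ : Measure ℝ) (p : ℝ → ℝ) (E : Set ℝ) (f : ℝ → ℝ) : Prop :=
  ∃ lam : ℝ, 0 < lam ∧ (∫ x in E, |f x / lam| ^ p x ∂μ) ≤ 1

/-- Local log-Hölder continuity of `p` on `E`. -/
def LogHolder (p : ℝ → ℝ) (E : Set ℝ) : Prop :=
  ∃ c : ℝ, 0 < c ∧ ∀ x ∈ E, ∀ y ∈ E, |x - y| ≤ 1/2 →
    |p x - p y| ≤ c / (-Real.log |x - y|)

/-- The conjugate exponent function `p'(x) = p(x)/(p(x)-1)`. -/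
noncomputable def pconj (p : ℝ → ℝ) (x : ℝ) : ℝ := p x / (p x - 1)

/-- Doubling condition for the measure `u(x) dx` on the interval `[A,B]`. -/
def DCond (u : ℝ → ℝ) (A B : ℝ) : Prop :=
  ∃ b : ℝ, 0 < b ∧ ∀ x ∈ Icc A B, ∀ r : ℝ, 0 < r → r < B - A →
    (∫ y in Ioo (x - 2*r) (x + 2*r) ∩ Icc A B, u y) ≤
      b * ∫ y in Ioo (x - r) (x + r) ∩ Icc A B, u y

open Real

noncomputable def oscOn {α : Type*} (f : α → ℝ) (s : Set α) : ℝ :=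
  sSup (f '' s) - sInf (f '' s)

section oscOn

variable {α : Type*} {f : α → ℝ} {s t : Set α}

lemma oscOn_nonneg (hs : s.Nonempty) (hb : BddBelow (f '' s)) (ha : BddAbove (f '' s)) :
    0 ≤ oscOn f s :=
  sub_nonneg.2 (csInf_le_csSup (hs.image f) hb ha)

lemma oscOn_mono (hst : s ⊆ t) (hs : s.Nonempty) (hb : BddBelow (f '' t))
    (ha : BddAbove (f '' t)) : oscOn f s ≤ oscOn f t :=
  sub_le_sub (csSup_le_csSup ha (hs.image f) (image_mono hst))
    (csInf_le_csInf hb (hs.image f) (image_mono hst))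

lemma oscOn_le {ε : ℝ} (hs : s.Nonempty) (h : ∀ x ∈ s, ∀ y ∈ s, f x - f y ≤ ε) :
    oscOn f s ≤ ε := by
  rw [oscOn, sub_le_iff_le_add]
  refine csSup_le (hs.image f) ?_
  rintro _ ⟨x, hx, rfl⟩
  have : f x - ε ≤ sInf (f '' s) :=
    le_csInf (hs.image f) (by rintro _ ⟨y, hy, rfl⟩; linarith [h x hx y hy])
  linarith

end oscOn

section LogHolder

variable {r : ℝ → ℝ}

lemma LogHolder.exists_oscOn_Icc_le {E : Set ℝ} (h : LogHolder r E) :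
    ∃ c, 0 < c ∧ ∀ a b, Icc a b ⊆ E → a < b → b - a ≤ 1 / 2 →
      oscOn r (Icc a b) ≤ c / -log (b - a) := by
  obtain ⟨c, hc, hcr⟩ := h
  refine ⟨c, hc, fun a b hE hab hsmall =>
    oscOn_le (nonempty_Icc.2 hab.le) fun x hx y hy => ?_⟩
  have hL : 0 < -log (b - a) := neg_pos.2 (log_neg (by linarith) (by linarith))
  have hxy : |x - y| ≤ b - a :=
    abs_sub_le_iff.2 ⟨by linarith [hx.2, hy.1], by linarith [hx.1, hy.2]⟩
  rcases eq_or_ne x y with rfl | hne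
  · simpa using (div_pos hc hL).le
  calc r x - r y ≤ |r x - r y| := le_abs_self _
    _ ≤ c / -log |x - y| := hcr x (hE hx) y (hE hy) (hxy.trans hsmall)
    _ ≤ c / -log (b - a) := div_le_div_of_nonneg_left hc.le hL
        (neg_le_neg (log_le_log (abs_pos.2 (sub_ne_zero.2 hne)) hxy))

lemma LogHolder.exists_oscOn_mul_neg_log_le {A B : ℝ} (h : LogHolder r (Icc A B))
    (hb : BddBelow (r '' Icc A B)) (ha : BddAbove (r '' Icc A B)) :
    ∃ c, 0 ≤ c ∧ ∀ a b, A ≤ a → a < b → b ≤ B →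
      oscOn r (Icc a b) * -log (b - a) ≤ c := by
  obtain ⟨c, hc, hosc⟩ := h.exists_oscOn_Icc_le
  refine ⟨max c (oscOn r (Icc A B) * log 2), hc.le.trans (le_max_left _ _),
    fun a b haA hab hbB => ?_⟩
  have hsub : Icc a b ⊆ Icc A B := Icc_subset_Icc haA hbB
  have hne : (Icc a b).Nonempty := nonempty_Icc.2 hab.le
  rcases le_or_gt (b - a) (1 / 2) with hsmall | hlarge
  · have hL : 0 < -log (b - a) := neg_pos.2 (log_neg (by linarith) (by linarith))
    exact ((le_div_iff₀ hL).1 (hosc a b hsub hab hsmall)).trans (le_max_left _ _)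
  · have hlog : -log (b - a) ≤ log 2 := by
      have := log_le_log (by norm_num) hlarge.le
      rw [one_div, log_inv] at this
      linarith
    calc oscOn r (Icc a b) * -log (b - a) ≤ oscOn r (Icc a b) * log 2 :=
          mul_le_mul_of_nonneg_left hlog
            (oscOn_nonneg hne (hb.mono (image_mono hsub)) (ha.mono (image_mono hsub)))
      _ ≤ oscOn r (Icc A B) * log 2 :=
          mul_le_mul_of_nonneg_right (oscOn_mono hsub hne hb ha) (log_nonneg one_le_two)
      _ ≤ _ := le_max_right _ _

end LogHolder

def IsDoublingOn (μ : Measure ℝ) (A B : ℝ) (β : ℝ≥0∞) : Prop :=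
  ∀ x ∈ Icc A B, ∀ ρ : ℝ, 0 < ρ → ρ < B - A →
    μ (Ioo (x - 2 * ρ) (x + 2 * ρ) ∩ Icc A B) ≤ β * μ (Ioo (x - ρ) (x + ρ) ∩ Icc A B)

namespace IsDoublingOn

variable {μ : Measure ℝ} {A B : ℝ} {β : ℝ≥0∞}

lemma measure_Ioo_two_pow_le (hd : IsDoublingOn μ A B β) {x ρ : ℝ} (hx : x ∈ Icc A B)
    (hρ : 0 < ρ) : ∀ n : ℕ, 2 ^ n * ρ < 2 * (B - A) →
      μ (Ioo (x - 2 ^ n * ρ) (x + 2 ^ n * ρ) ∩ Icc A B) ≤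
        β ^ n * μ (Ioo (x - ρ) (x + ρ) ∩ Icc A B)
  | 0, _ => by simp
  | n + 1, hn => by
    have hpos : 0 < 2 ^ n * ρ := by positivity
    have hn' : 2 ^ n * ρ < B - A := by rw [pow_succ] at hn; linarith
    calc μ (Ioo (x - 2 ^ (n + 1) * ρ) (x + 2 ^ (n + 1) * ρ) ∩ Icc A B)
        = μ (Ioo (x - 2 * (2 ^ n * ρ)) (x + 2 * (2 ^ n * ρ)) ∩ Icc A B) := by ring_nf
      _ ≤ β * μ (Ioo (x - 2 ^ n * ρ) (x + 2 ^ n * ρ) ∩ Icc A B) := hd x hx _ hpos hn'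
      _ ≤ β * (β ^ n * μ (Ioo (x - ρ) (x + ρ) ∩ Icc A B)) := by
          gcongr
          exact hd.measure_Ioo_two_pow_le hx hρ n (by linarith)
      _ = β ^ (n + 1) * μ (Ioo (x - ρ) (x + ρ) ∩ Icc A B) := by ring

lemma exists_measure_Icc_le (hd : IsDoublingOn μ A B β) {a b : ℝ} (haA : A ≤ a) (hab : a < b)
    (hbB : b ≤ B) : ∃ n : ℕ, (2 : ℝ) ^ n ≤ 3 * (B - A) / (b - a) ∧
      μ (Icc (A + (B - A) / 3) (B - (B - A) / 3)) ≤ β ^ n * μ (Icc a b) := by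
  set ρ := (b - a) / 2 with hρ_def
  set x := (a + b) / 2 with hx_def
  have hρ : 0 < ρ := by linarith
  have hx : x ∈ Icc A B := ⟨by linarith, by linarith⟩
  -- The radius `2 ^ (k + 1) * ρ` exceeds `2 (B - A) / 3`, so the ball about `x` covers the
  -- middle third of `[A, B]`, while every intermediate radius stays below `B - A`.
  obtain ⟨k, hk₁, hk₂⟩ := exists_nat_pow_near (x := 3 * (B - A) / 4 / ρ)
    (by rw [le_div_iff₀ hρ]; linarith) one_lt_two
  rw [le_div_iff₀ hρ] at hk₁
  rw [div_lt_iff₀ hρ] at hk₂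
  refine ⟨k + 1, ?_, ?_⟩
  · rw [le_div_iff₀ (by linarith), show b - a = 2 * ρ by ring]
    linarith [show (2 : ℝ) ^ (k + 1) * (2 * ρ) = 4 * (2 ^ k * ρ) by ring]
  calc μ (Icc (A + (B - A) / 3) (B - (B - A) / 3))
      ≤ μ (Ioo (x - 2 ^ (k + 1) * ρ) (x + 2 ^ (k + 1) * ρ) ∩ Icc A B) := by
        refine measure_mono fun y hy => ⟨⟨?_, ?_⟩, ⟨?_, ?_⟩⟩ <;>
          linarith [hy.1, hy.2, hx.1, hx.2]
    _ ≤ β ^ (k + 1) * μ (Ioo (x - ρ) (x + ρ) ∩ Icc A B) :=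
        hd.measure_Ioo_two_pow_le hx hρ (k + 1) (by rw [pow_succ]; linarith)
    _ ≤ β ^ (k + 1) * μ (Icc a b) := by
        gcongr
        rw [show x - ρ = a by ring, show x + ρ = b by ring]
        exact inter_subset_left.trans Ioo_subset_Icc_self

lemma exists_mul_rpow_le_measure_Icc [IsFiniteMeasure μ] (hAB : A < B)
    (hd : IsDoublingOn μ A B β) (hβ : β < ⊤)
    (hpos : ∀ a b : ℝ, A ≤ a → a < b → b ≤ B → 0 < μ (Icc a b)) :
    ∃ m K : ℝ, 0 < m ∧ 0 ≤ K ∧ ∀ a b : ℝ, A ≤ a → a < b → b ≤ B →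
      m * (b - a) ^ K ≤ (μ (Icc a b)).toReal := by
  set m₀ := (μ (Icc (A + (B - A) / 3) (B - (B - A) / 3))).toReal
  have hm₀ : 0 < m₀ := ENNReal.toReal_pos
    (hpos _ _ (by linarith) (by linarith) (by linarith)).ne' (measure_ne_top _ _)
  set β' := max 1 β.toReal
  set K := logb 2 β'
  have hK : 0 ≤ K := logb_nonneg one_lt_two (le_max_left _ _)
  refine ⟨m₀ / (3 * (B - A)) ^ K, K, by have := sub_pos.2 hAB; positivity, hK,
    fun a b haA hab hbB => ?_⟩
  obtain ⟨n, hn, hμ⟩ := hd.exists_measure_Icc_le haA hab hbB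
  have hba : 0 < b - a := sub_pos.2 hab
  have hm₀_le : m₀ ≤ β' ^ n * (μ (Icc a b)).toReal := by
    have := ENNReal.toReal_mono
      (ENNReal.mul_ne_top (ENNReal.pow_ne_top hβ.ne) (measure_ne_top _ _)) hμ
    rw [ENNReal.toReal_mul, ENNReal.toReal_pow] at this
    exact this.trans (by gcongr; exact le_max_right _ _)
  have hβ' : β' ^ n = ((2 : ℝ) ^ n) ^ K := by
    rw [← rpow_pow_comm zero_le_two, rpow_logb two_pos (by norm_num) (by positivity)]
  calc m₀ / (3 * (B - A)) ^ K * (b - a) ^ K = m₀ / (3 * (B - A) / (b - a)) ^ K := by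
        rw [div_rpow (by linarith) hba.le]
        field_simp
    _ ≤ m₀ / ((2 : ℝ) ^ n) ^ K := by gcongr
    _ = m₀ / β' ^ n := by rw [hβ']
    _ ≤ (μ (Icc a b)).toReal := by
        rw [div_le_iff₀ (by positivity)]
        linarith

end IsDoublingOn

lemma rpow_neg_le_exp_of_mul_rpow_le {t m K ℓ δ D c : ℝ} (hm : 0 < m) (hK : 0 ≤ K)
    (hℓ : 0 < ℓ) (hδ : 0 ≤ δ) (hδD : δ ≤ D) (ht : m * ℓ ^ K ≤ t) (hc : δ * -log ℓ ≤ c) :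
    t ^ (-δ) ≤ exp (D * |log m| + K * c) := by
  have hmℓ : 0 < m * ℓ ^ K := by positivity
  have hlog : log m + K * log ℓ ≤ log t := by
    simpa [log_mul hm.ne' (rpow_pos_of_pos hℓ K).ne', log_rpow hℓ] using log_le_log hmℓ ht
  have hm_abs : δ * -log m ≤ D * |log m| :=
    (mul_le_mul_of_nonneg_left (neg_le_abs _) hδ).trans
      (mul_le_mul_of_nonneg_right hδD (abs_nonneg _))
  rw [rpow_def_of_pos (hmℓ.trans_le ht), exp_le_exp]
  calc log t * -δ ≤ δ * -log m + K * (δ * -log ℓ) := by nlinarith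
    _ ≤ D * |log m| + K * c := by gcongr

theorem stmt2_general (A B : ℝ) (hAB : A < B)
    (μ : Measure ℝ) [IsFiniteMeasure μ]
    (hdbl : ∃ b : ℝ≥0∞, 0 < b ∧ b < ⊤ ∧ ∀ x ∈ Icc A B, ∀ ρ : ℝ, 0 < ρ → ρ < B - A →
      μ (Ioo (x - 2*ρ) (x + 2*ρ) ∩ Icc A B) ≤ b * μ (Ioo (x - ρ) (x + ρ) ∩ Icc A B))
    (hpos : ∀ a b : ℝ, A ≤ a → a < b → b ≤ B → 0 < μ (Icc a b))
    (r : ℝ → ℝ)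
    (hr1 : 1 ≤ sInf (r '' Icc A B)) (hr2 : BddAbove (r '' Icc A B))
    (hLH : LogHolder r (Icc A B)) :
    ∃ C : ℝ, 0 < C ∧ ∀ a b : ℝ, A ≤ a → a ≤ b → b ≤ B →
      (μ (Icc a b)).toReal ^ (sInf (r '' Icc a b) - sSup (r '' Icc a b)) ≤ C := by
  obtain ⟨β, -, hβ, hd⟩ := hdbl
  obtain ⟨m, K, hm, hK, hlow⟩ := IsDoublingOn.exists_mul_rpow_le_measure_Icc hAB hd hβ hpos
  -- `sInf` of a set that is not bounded below is `0`
  have hr0 : BddBelow (r '' Icc A B) := by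
    by_contra h
    rw [Real.sInf_of_not_bddBelow h] at hr1
    norm_num at hr1
  obtain ⟨c, hc, hosc⟩ := hLH.exists_oscOn_mul_neg_log_le hr0 hr2
  have hD : 0 ≤ oscOn r (Icc A B) := oscOn_nonneg (nonempty_Icc.2 hAB.le) hr0 hr2
  refine ⟨exp (oscOn r (Icc A B) * |log m| + K * c), exp_pos _, fun a b haA hab hbB => ?_⟩
  rcases hab.eq_or_lt with rfl | hab
  · rw [Icc_self, image_singleton, csInf_singleton, csSup_singleton, sub_self, rpow_zero]
    exact one_le_exp (by positivity)
  have hsub : Icc a b ⊆ Icc A B := Icc_subset_Icc haA hbB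
  have hne : (Icc a b).Nonempty := nonempty_Icc.2 hab.le
  rw [← neg_sub]
  exact rpow_neg_le_exp_of_mul_rpow_le hm hK (sub_pos.2 hab)
    (oscOn_nonneg hne (hr0.mono (image_mono hsub)) (hr2.mono (image_mono hsub)))
    (oscOn_mono hsub hne hr0 hr2) (hlow a b haA hab hbB) (hosc a b haA hab hbB)

/-- For a finite doubling measure on a bounded interval and a log-Hölder
continuous exponent, `μ(I)^{r_-(I) - r_+(I)}` is uniformly bounded over subintervals. -/
theorem stmt2 (A B : ℝ) (hAB : A < B)
    (μ : Measure ℝ) [IsFiniteMeasure μ]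
    (hdbl : ∃ b : ℝ≥0∞, 0 < b ∧ b < ⊤ ∧ ∀ x ∈ Icc A B, ∀ ρ : ℝ, 0 < ρ → ρ < B - A →
      μ (Ioo (x - 2*ρ) (x + 2*ρ) ∩ Icc A B) ≤ b * μ (Ioo (x - ρ) (x + ρ) ∩ Icc A B))
    (hpos : ∀ a b : ℝ, A ≤ a → a < b → b ≤ B → 0 < μ (Icc a b))
    (r : ℝ → ℝ) (hrmeas : Measurable r)
    (hr1 : 1 ≤ sInf (r '' Icc A B)) (hr2 : BddAbove (r '' Icc A B))
    (hLH : LogHolder r (Icc A B)) :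
    ∃ C : ℝ, 0 < C ∧ ∀ a b : ℝ, A ≤ a → a ≤ b → b ≤ B →
      (μ (Icc a b)).toReal ^ (sInf (r '' Icc a b) - sSup (r '' Icc a b)) ≤ C :=
  stmt2_general A B hAB μ hdbl hpos r hr1 hr2 hLH
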